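/- arXiv:1903.10613 — 2 statements merged into one kernel-verified Lean document; each statement's English description precedes it below -/
import Mathlib

section
/- Let a be an odd positive integer, b ∈ ℕ, and n = a·2^b. A vector v ∈ 𝔽_2^n works if and only if for every j ∈ {0,…,2^b−1}, the vector (v_j, v_{2^b+j}, v_{2·2^b+j}, …, v_{(a−1)·2^b+j}) ∈ 𝔽_2^a works; equivalently (since a is odd), if and only if ∑_{i=0}^{a−1} v_{i·2^b+j} = 0 in 𝔽_2 for every j ∈ {0,…,2^b−1}. -/
/-- The cyclic shift operator on `𝔽₂ⁿ` (indexed by `ZMod n`): `(cshift x) i = x (i - 1)`. -/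
def cshift {n : ℕ} (x : ZMod n → ZMod 2) : ZMod n → ZMod 2 := fun i => x (i - 1)

/-- The standard dot product over `𝔽₂`. -/
def dot {n : ℕ} [NeZero n] (v x : ZMod n → ZMod 2) : ZMod 2 := ∑ i, v i * x i

/-- A vector `v ∈ 𝔽₂ⁿ` works if for every `x` some cyclic shift of `x` is orthogonal to `v`. -/
def Works {n : ℕ} [NeZero n] (v : ZMod n → ZMod 2) : Prop :=
  ∀ x : ZMod n → ZMod 2, ∃ k : ℕ, dot v (cshift^[k] x) = 0

/-!
Summing `v` over the fibres of `ℤ/n → ℤ/2ᵇ` preserves working, and on `ℤ/2ᵇ` only `0` works: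
by induction on `b`, a working `S` on `ℤ/2ᵇ⁺¹` has working, hence zero, fibre sums on `ℤ/2ᵇ`, so `S`
is `2ᵇ`-periodic, i.e. pulled back from `ℤ/2ᵇ`; since fibre summation is adjoint to pulling back and
commutes with the shift, working descends along the pullback too. Conversely, if the fibre sums of
`v` vanish but `v · σᵏx = 1` for every `k`, summing over the `a` shifts `k = i·2ᵇ` gives `a = 1`
on one side and `∑ₜ (∑ᵢ v_{t+i·2ᵇ}) xₜ = 0` on the other.
-/

def fiberSum {α β M : Type*} [Fintype α] [DecidableEq β] [AddCommMonoid M]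
    (f : α → β) (x : α → M) (b : β) : M :=
  ∑ a with f a = b, x a

section FiberSum

variable {α β : Type*} [Fintype α] [DecidableEq β]

theorem sum_mul_comp_eq_sum_fiberSum_mul {R : Type*} [NonUnitalNonAssocSemiring R]
    [Fintype β] (f : α → β) (v : α → R) (y : β → R) :
    ∑ a, v a * y (f a) = ∑ b, fiberSum f v b * y b := by
  simp only [fiberSum, Finset.sum_mul]
  rw [← Finset.sum_fiberwise Finset.univ f]
  refine Finset.sum_congr rfl fun b _ => Finset.sum_congr rfl fun a ha => ?_
  rw [(Finset.mem_filter.mp ha).2]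

theorem fiberSum_surjective [DecidableEq α] {M : Type*} [AddCommMonoid M] {f : α → β}
    (hf : Function.Surjective f) : Function.Surjective (fiberSum (M := M) f) := by
  intro c
  refine ⟨fun a => if a = Function.surjInv hf (f a) then c (f a) else 0, funext fun b => ?_⟩
  have hmem : Function.surjInv hf b ∈ ({a | f a = b} : Finset α) := by
    simp [Function.surjInv_eq hf]
  rw [fiberSum, Finset.sum_congr rfl fun a ha => by rw [(Finset.mem_filter.mp ha).2],
    Finset.sum_ite_eq' _ _ _, if_pos hmem]

end FiberSum

theorem sum_zmod_val_eq_sum_range {M : Type*} [AddCommMonoid M] (a : ℕ) [NeZero a]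
    (f : ℕ → M) : ∑ i : ZMod a, f i.val = ∑ i ∈ Finset.range a, f i := by
  obtain ⟨k, rfl⟩ := Nat.exists_eq_succ_of_ne_zero (NeZero.ne a)
  exact Fin.sum_univ_eq_sum_range f _

theorem cshift_iterate_apply {n : ℕ} (x : ZMod n → ZMod 2) (k : ℕ) (i : ZMod n) :
    (cshift^[k] x) i = x (i - k) := by
  induction k generalizing i with
  | zero => simp
  | succ k ih =>
    rw [Function.iterate_succ_apply', cshift, ih, Nat.cast_succ, sub_sub, add_comm]

section Shift

variable {n : ℕ} [NeZero n]

theorem dot_comm (v x : ZMod n → ZMod 2) : dot v x = dot x v := by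
  simp only [dot, mul_comm]

theorem dot_cshift_iterate (v x : ZMod n → ZMod 2) (k : ℕ) :
    dot v (cshift^[k] x) = ∑ t, v (t + k) * x t :=
  Fintype.sum_equiv (Equiv.subRight (k : ZMod n)) _ _ fun s => by
    simp [cshift_iterate_apply]

theorem Works.sum_eq_zero {w : ZMod n → ZMod 2} (hw : Works w) : ∑ s, w s = 0 := by
  obtain ⟨k, hk⟩ := hw fun _ => 1
  simpa [dot, cshift_iterate_apply] using hk

end Shift

section Fold

variable {n m : ℕ} (h : m ∣ n)

theorem cshift_iterate_comp_castHom (y : ZMod m → ZMod 2) (k : ℕ) :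
    cshift^[k] (y ∘ ZMod.castHom h (ZMod m)) = cshift^[k] y ∘ ZMod.castHom h (ZMod m) := by
  funext s
  simp only [Function.comp_apply, cshift_iterate_apply, map_sub, map_natCast]

variable [NeZero n]

theorem fiberSum_cshift_iterate (x : ZMod n → ZMod 2) (k : ℕ) :
    fiberSum (ZMod.castHom h (ZMod m)) (cshift^[k] x) =
      cshift^[k] (fiberSum (ZMod.castHom h (ZMod m)) x) := by
  funext j
  simp only [fiberSum, cshift_iterate_apply, Finset.sum_filter]
  exact Fintype.sum_equiv (Equiv.subRight (k : ZMod n)) _ _ fun s => by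
    simp only [Equiv.subRight_apply, map_sub, map_natCast, eq_sub_iff_add_eq, sub_add_cancel]

theorem exists_lt_eq_add_of_castHom_eq {s t : ZMod n}
    (hst : ZMod.castHom h (ZMod m) t = ZMod.castHom h (ZMod m) s) :
    ∃ i < n / m, t = s + (i * m : ℕ) := by
  have hdvd : m ∣ (t - s).val := by
    rw [← ZMod.natCast_eq_zero_iff, ZMod.natCast_val, ← ZMod.castHom_apply (h := h), map_sub,
      hst, sub_self]
  refine ⟨(t - s).val / m, Nat.div_lt_div_of_lt_of_dvd h (ZMod.val_lt _), ?_⟩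
  rw [Nat.div_mul_cancel hdvd, ZMod.natCast_zmod_val, add_sub_cancel]

theorem fiberSum_castHom_apply {M : Type*} [AddCommMonoid M] (x : ZMod n → M) (s : ZMod n) :
    fiberSum (ZMod.castHom h (ZMod m)) x (ZMod.castHom h (ZMod m) s) =
      ∑ i ∈ Finset.range (n / m), x (s + (i * m : ℕ)) := by
  have hm : 0 < m := Nat.pos_of_dvd_of_pos h (Nat.pos_of_ne_zero (NeZero.ne n))
  have hlt : ∀ i ∈ Finset.range (n / m), i * m < n := fun i hi =>
    mul_comm m i ▸ (Nat.lt_div_iff_mul_lt' h i).mp (Finset.mem_range.mp hi)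
  symm
  refine Finset.sum_nbij (fun i => s + (i * m : ℕ)) ?_ ?_ ?_ fun _ _ => rfl
  · intro i _
    simp only [Finset.mem_filter, Finset.mem_univ, true_and]
    rw [map_add, map_natCast, Nat.cast_mul, ZMod.natCast_self, mul_zero, add_zero]
  · intro i hi i' hi' hii'
    have := (ZMod.natCast_eq_natCast_iff' _ _ _).mp (add_left_cancel hii')
    rw [Nat.mod_eq_of_lt (hlt i hi), Nat.mod_eq_of_lt (hlt i' hi')] at this
    exact Nat.eq_of_mul_eq_mul_right hm this
  · intro t ht
    obtain ⟨i, hi, rfl⟩ := exists_lt_eq_add_of_castHom_eq h (Finset.mem_filter.mp ht).2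
    exact ⟨i, Finset.mem_range.mpr hi, rfl⟩

theorem exists_eq_comp_castHom_of_periodic {α : Type*} {f : ZMod n → α}
    (hf : Function.Periodic f (m : ZMod n)) :
    ∃ g : ZMod m → α, f = g ∘ ZMod.castHom h (ZMod m) := by
  have hπ := ZMod.ringHom_surjective (ZMod.castHom h (ZMod m))
  refine ⟨f ∘ Function.surjInv hπ, funext fun s => ?_⟩
  obtain ⟨i, -, hi⟩ := exists_lt_eq_add_of_castHom_eq h (Function.surjInv_eq hπ _)
  rw [Function.comp_apply, Function.comp_apply, hi, Nat.cast_mul, hf.nat_mul i s]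

variable [NeZero m]

theorem dot_comp_castHom (v : ZMod n → ZMod 2) (y : ZMod m → ZMod 2) :
    dot v (y ∘ ZMod.castHom h (ZMod m)) = dot (fiberSum (ZMod.castHom h (ZMod m)) v) y :=
  sum_mul_comp_eq_sum_fiberSum_mul _ v y

end Fold

section Works

variable {n m : ℕ} [NeZero n] (h : m ∣ n)

theorem works_of_fiberSum_eq_zero (hodd : Odd (n / m)) {v : ZMod n → ZMod 2}
    (hv : fiberSum (ZMod.castHom h (ZMod m)) v = 0) : Works v := by
  intro x
  by_contra! hx
  have hone : ∀ k, dot v (cshift^[k] x) = 1 := fun k => Fin.eq_one_of_ne_zero _ (hx k)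
  refine one_ne_zero (α := ZMod 2) ?_
  calc (1 : ZMod 2) = ∑ i ∈ Finset.range (n / m), dot v (cshift^[i * m] x) := by
        simp [hone, hodd.natCast_zmod_two]
    _ = ∑ t, (∑ i ∈ Finset.range (n / m), v (t + (i * m : ℕ))) * x t := by
        simp only [dot_cshift_iterate, Finset.sum_mul]
        exact Finset.sum_comm
    _ = ∑ t, fiberSum (ZMod.castHom h (ZMod m)) v (ZMod.castHom h (ZMod m) t) * x t := by
        simp only [fiberSum_castHom_apply]
    _ = 0 := by simp [hv]

variable [NeZero m]

theorem Works.fiberSum_castHom {v : ZMod n → ZMod 2} (hv : Works v) :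
    Works (fiberSum (ZMod.castHom h (ZMod m)) v) := by
  intro y
  obtain ⟨k, hk⟩ := hv (y ∘ ZMod.castHom h (ZMod m))
  exact ⟨k, by rwa [cshift_iterate_comp_castHom, dot_comp_castHom] at hk⟩

theorem Works.of_comp_castHom {T : ZMod m → ZMod 2}
    (hT : Works (T ∘ ZMod.castHom h (ZMod m))) : Works T := by
  intro c
  obtain ⟨x, rfl⟩ := fiberSum_surjective (ZMod.ringHom_surjective (ZMod.castHom h (ZMod m))) c
  obtain ⟨k, hk⟩ := hT x
  exact ⟨k, by rwa [dot_comm, dot_comp_castHom, fiberSum_cshift_iterate, dot_comm] at hk⟩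

end Works

theorem works_iff_sum_eq_zero_of_odd {n : ℕ} [NeZero n] (hn : Odd n) {w : ZMod n → ZMod 2} :
    Works w ↔ ∑ s, w s = 0 := by
  refine ⟨Works.sum_eq_zero, fun hw => works_of_fiberSum_eq_zero (one_dvd n)
    (by rwa [Nat.div_one]) (funext fun j => ?_)⟩
  rw [fiberSum, Finset.filter_true_of_mem fun s _ => Subsingleton.elim _ _]
  exact hw

theorem eq_zero_of_works_two_pow {b : ℕ} {S : ZMod (2 ^ b) → ZMod 2} (hS : Works S) :
    S = 0 := by
  induction b with
  | zero =>
    have : Subsingleton (ZMod (2 ^ 0)) := ZMod.subsingleton_iff.mpr (pow_zero 2)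
    funext s
    rw [← Fintype.sum_subsingleton S s]
    exact hS.sum_eq_zero
  | succ b ih =>
    have h : 2 ^ b ∣ 2 ^ (b + 1) := pow_dvd_pow 2 b.le_succ
    have hfold := ih (hS.fiberSum_castHom h)
    have hper : Function.Periodic S ((2 ^ b : ℕ) : ZMod (2 ^ (b + 1))) := fun s => by
      have := congrFun hfold (ZMod.castHom h _ s)
      have two : 2 ^ (b + 1) / 2 ^ b = 2 := by
        rw [pow_succ, Nat.mul_div_cancel_left _ (by positivity)]
      rw [fiberSum_castHom_apply, two] at this
      simp only [Finset.sum_range_succ, Finset.sum_range_zero, zero_add, zero_mul, one_mul,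
        Nat.cast_zero, add_zero, Pi.zero_apply, CharTwo.add_eq_zero] at this
      exact this.symm
    obtain ⟨T, rfl⟩ := exists_eq_comp_castHom_of_periodic h hper
    rw [ih (hS.of_comp_castHom h)]
    rfl

theorem works_iff_fiberSum_eq_zero {n b : ℕ} [NeZero n] (h : 2 ^ b ∣ n) (hodd : Odd (n / 2 ^ b))
    {v : ZMod n → ZMod 2} : Works v ↔ fiberSum (ZMod.castHom h (ZMod (2 ^ b))) v = 0 :=
  ⟨fun hv => eq_zero_of_works_two_pow (hv.fiberSum_castHom h), works_of_fiberSum_eq_zero h hodd⟩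

/-- Let `a` be odd, `b ∈ ℕ` and `n = a·2ᵇ`. A vector `v ∈ 𝔽₂ⁿ` works iff for every
`j ∈ {0,…,2ᵇ−1}` the vector `(v_j, v_{2ᵇ+j}, …, v_{(a−1)·2ᵇ+j}) ∈ 𝔽₂ᵃ` works;
equivalently (since `a` is odd), iff `∑_{i=0}^{a−1} v_{i·2ᵇ+j} = 0` for every such `j`. -/
theorem works_iff_components (a b : ℕ) [NeZero a] [NeZero (a * 2 ^ b)] (ha : Odd a)
    (v : ZMod (a * 2 ^ b) → ZMod 2) :
    (Works v ↔ ∀ j < 2 ^ b,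
        Works (fun i : ZMod a => v (((i.val * 2 ^ b + j : ℕ) : ZMod (a * 2 ^ b))))) ∧
    (Works v ↔ ∀ j < 2 ^ b,
        ∑ i ∈ Finset.range a, v (((i * 2 ^ b + j : ℕ) : ZMod (a * 2 ^ b))) = 0) := by
  have h : 2 ^ b ∣ a * 2 ^ b := dvd_mul_left _ _
  have hdiv : a * 2 ^ b / 2 ^ b = a := Nat.mul_div_cancel a (by positivity)
  have hcol (j : ℕ) : ∑ i ∈ Finset.range a, v ((i * 2 ^ b + j : ℕ) : ZMod (a * 2 ^ b)) =
      fiberSum (ZMod.castHom h (ZMod (2 ^ b))) v (j : ZMod (2 ^ b)) := by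
    rw [← map_natCast (ZMod.castHom h (ZMod (2 ^ b))) j, fiberSum_castHom_apply, hdiv]
    simp only [Nat.cast_add, add_comm]
  have hsums : Works v ↔ ∀ j < 2 ^ b,
      ∑ i ∈ Finset.range a, v (((i * 2 ^ b + j : ℕ) : ZMod (a * 2 ^ b))) = 0 := by
    rw [works_iff_fiberSum_eq_zero h (by rwa [hdiv]), funext_iff]
    simp only [hcol, Pi.zero_apply]
    exact ⟨fun H j _ => H j, fun H j => ZMod.natCast_zmod_val j ▸ H _ (ZMod.val_lt j)⟩
  refine ⟨hsums.trans (forall₂_congr fun j _ => ?_), hsums⟩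
  rw [works_iff_sum_eq_zero_of_odd ha, sum_zmod_val_eq_sum_range a fun i =>
    v ((i * 2 ^ b + j : ℕ) : ZMod (a * 2 ^ b))]
end

section
/- Let p be a prime and let q be a power of p. Then for all n ∈ ℕ, h_q(pn) ≤ p·h_q(n). -/
/-- The cyclic shift operator on `Fⁿ` (indexed by `ZMod n`): `(cshiftF x) i = x (i - 1)`. -/
def cshiftF {n : ℕ} {F : Type*} (x : ZMod n → F) : ZMod n → F := fun i => x (i - 1)

/-- A subspace `U ≤ Fⁿ` is cyclically covering if every vector of `Fⁿ` has a cyclic shift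
lying in `U`, i.e. `⋃ᵢ σⁱ(U) = Fⁿ`. -/
def CyclicallyCoveringF {n : ℕ} {F : Type*} [Field F]
    (U : Submodule F (ZMod n → F)) : Prop :=
  ∀ x : ZMod n → F, ∃ k : ℕ, cshiftF^[k] x ∈ U

/-- `hF F n` is the largest possible codimension of a cyclically covering subspace of `Fⁿ`. -/
noncomputable def hF (F : Type*) [Field F] (n : ℕ) : ℕ :=
  sSup {d : ℕ | ∃ U : Submodule F (ZMod n → F),
    CyclicallyCoveringF U ∧
    Module.finrank F (ZMod n → F) - Module.finrank F U = d}

/-!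
Write `N = p * n`, `σ` for the cyclic shift of `F^N` and `T = σ ^ n - 1`. In characteristic `p`,
`T ^ p = σ ^ N - 1 = 0`, and `ker T` is the space of `n`-periodic vectors, a copy of `F^n`.
As `dim F^N = p * dim (ker T)`, every `T ^ j` with `j < p` maps `ker T ^ (j + 1)` onto `ker T`.
For a cyclically covering `U ≤ F^N` the layers `T ^ j (U ⊓ ker T ^ (j + 1)) ≤ ker T ≅ F^n` are
then cyclically covering (because `T` commutes with `σ`), and their dimensions add up to
`dim U`. So the codimension of `U` is a sum of `p` codimensions, each at most `hF F n`.
-/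

open Module Finset LinearMap Polynomial

theorem sub_one_pow_char_of_algebra {K A : Type*} [CommRing K] [Ring A] [Algebra K A]
    (p : ℕ) [Fact p.Prime] [CharP K p] (a : A) : (a - 1) ^ p = a ^ p - 1 := by
  simpa using congrArg (Polynomial.aeval a) (sub_pow_char (p := p) (Polynomial.X : K[X]) 1)

section Filtration

variable {K V : Type*} [DivisionRing K] [AddCommGroup V] [Module K V]

theorem Submodule.finrank_map_add_finrank_inf_ker {V₂ : Type*} [AddCommGroup V₂] [Module K V₂]
    [FiniteDimensional K V] (f : V →ₗ[K] V₂) (W : Submodule K V) :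
    finrank K (W.map f) + finrank K ↥(W ⊓ ker f) = finrank K W := by
  have h := finrank_range_add_finrank_ker (f.domRestrict W)
  rwa [range_domRestrict, ker_domRestrict, ← Submodule.finrank_map_subtype_eq,
    Submodule.map_comap_subtype] at h

theorem Submodule.finrank_comap_eq_of_le_range {R M M₂ : Type*} [Semiring R] [AddCommMonoid M]
    [Module R M] [AddCommMonoid M₂] [Module R M₂] {f : M →ₗ[R] M₂} (hf : Function.Injective f)
    {W : Submodule R M₂} (hW : W ≤ range f) : finrank R (W.comap f) = finrank R W := by
  rw [(Submodule.equivMapOfInjective f hf _).finrank_eq, Submodule.map_comap_eq_of_le hW]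

variable (T : Module.End K V)

theorem map_pow_le_ker_of_le_ker_pow_succ {j : ℕ} {W : Submodule K V}
    (hW : W ≤ ker (T ^ (j + 1))) : W.map (T ^ j) ≤ ker T := by
  rintro _ ⟨y, hy, rfl⟩
  rw [mem_ker, ← Module.End.mul_apply, ← pow_succ']
  exact hW hy

variable [FiniteDimensional K V]

theorem sum_finrank_map_pow_inf_ker_pow_succ (U : Submodule K V) (m : ℕ) :
    ∑ j ∈ range m, finrank K ((U ⊓ ker (T ^ (j + 1))).map (T ^ j)) =
      finrank K ↥(U ⊓ ker (T ^ m)) := by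
  induction m with
  | zero => rw [pow_zero, Module.End.one_eq_id, ker_id, inf_bot_eq, finrank_bot]; rfl
  | succ m ih =>
    have h := Submodule.finrank_map_add_finrank_inf_ker (T ^ m) (U ⊓ ker (T ^ (m + 1)))
    have hmono : ker (T ^ m) ≤ ker (T ^ (m + 1)) := (iterateKer T).monotone m.le_succ
    rw [inf_assoc, inf_eq_right.2 hmono] at h
    rw [sum_range_succ, ih]
    omega

theorem map_pow_ker_pow_succ_eq_ker {p : ℕ} (hT : T ^ p = 0)
    (hV : finrank K V = p * finrank K (ker T)) {j : ℕ} (hj : j < p) :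
    (ker (T ^ (j + 1))).map (T ^ j) = ker T := by
  have hle : ∀ i, (ker (T ^ (i + 1))).map (T ^ i) ≤ ker T :=
    fun i ↦ map_pow_le_ker_of_le_ker_pow_succ T le_rfl
  have hsum : ∑ i ∈ range p, finrank K ((ker (T ^ (i + 1))).map (T ^ i)) =
      ∑ _i ∈ range p, finrank K (ker T) := by
    have h := sum_finrank_map_pow_inf_ker_pow_succ T ⊤ p
    rw [top_inf_eq, hT, ker_zero, finrank_top, hV] at h
    rw [sum_const, card_range, smul_eq_mul, ← h]
    exact sum_congr rfl fun i _ ↦ by rw [top_inf_eq]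
  refine Submodule.eq_of_le_of_finrank_eq (hle j) ?_
  exact (sum_eq_sum_iff_of_le fun i _ ↦ Submodule.finrank_mono (hle i)).1 hsum j (mem_range.2 hj)

end Filtration

theorem exists_pow_mem_map_inf_ker {R M : Type*} [Semiring R] [AddCommMonoid M] [Module R M]
    {σ A B : Module.End R M} (hA : Commute σ A) (hB : Commute σ B) {U : Submodule R M}
    (hU : ∀ y, ∃ k : ℕ, (σ ^ k) y ∈ U) {x : M} (hx : x ∈ (ker A).map B) :
    ∃ k : ℕ, (σ ^ k) x ∈ (U ⊓ ker A).map B := by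
  obtain ⟨y, hy, rfl⟩ := hx
  obtain ⟨k, hk⟩ := hU y
  refine ⟨k, (σ ^ k) y, ⟨hk, ?_⟩, ?_⟩
  · rw [SetLike.mem_coe, mem_ker, ← Module.End.mul_apply, ← (hA.pow_left k).eq,
      Module.End.mul_apply, mem_ker.1 hy, map_zero]
  · rw [← Module.End.mul_apply, ← (hB.pow_left k).eq, Module.End.mul_apply]

section CyclicShift

variable (R : Type*) [Semiring R]

def cshiftL (m : ℕ) : Module.End R (ZMod m → R) := funLeft R R (· - 1)

theorem cshiftL_pow_apply {m : ℕ} (k : ℕ) (x : ZMod m → R) (i : ZMod m) :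
    (cshiftL R m ^ k) x i = x (i - k) := by
  induction k generalizing x with
  | zero => simp
  | succ k ih =>
    rw [pow_succ, Module.End.mul_apply, ih]
    simp only [cshiftL, funLeft_apply, Nat.cast_succ, sub_sub]

theorem iterate_cshiftF {m : ℕ} (k : ℕ) (x : ZMod m → R) :
    cshiftF^[k] x = (cshiftL R m ^ k) x := by
  rw [Module.End.pow_apply]
  rfl

theorem cshiftL_pow_self (m : ℕ) : cshiftL R m ^ m = 1 := by
  ext x i
  simp [cshiftL_pow_apply]

def periodicLift {m N : ℕ} (h : m ∣ N) : (ZMod m → R) →ₗ[R] (ZMod N → R) :=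
  funLeft R R (ZMod.castHom h (ZMod m))

variable {R} {m N : ℕ} (h : m ∣ N)

theorem periodicLift_injective : Function.Injective (periodicLift R h) :=
  funLeft_injective_of_surjective _ _ _ (ZMod.castHom_surjective h)

theorem cshiftL_pow_periodicLift (k : ℕ) (x : ZMod m → R) :
    (cshiftL R N ^ k) (periodicLift R h x) = periodicLift R h ((cshiftL R m ^ k) x) := by
  ext i
  simp only [periodicLift, funLeft_apply, cshiftL_pow_apply, map_sub, map_natCast]

theorem range_periodicLift {R : Type*} [Ring R] [NeZero N] :
    range (periodicLift R h) = ker (cshiftL R N ^ m - 1) := by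
  apply le_antisymm
  · rintro _ ⟨x, rfl⟩
    rw [mem_ker, LinearMap.sub_apply, cshiftL_pow_periodicLift, cshiftL_pow_self,
      Module.End.one_apply, Module.End.one_apply, sub_self]
  · intro y hy
    rw [mem_ker, LinearMap.sub_apply, Module.End.one_apply, sub_eq_zero] at hy
    have hper : Function.Periodic y (m : ZMod N) := fun i ↦ by
      simpa [cshiftL_pow_apply] using (congrFun hy (i + m)).symm
    refine ⟨fun a ↦ y a.val, funext fun i ↦ ?_⟩
    obtain ⟨a, rfl⟩ : ∃ a : ℕ, (a : ZMod N) = i := ⟨i.val, ZMod.natCast_zmod_val i⟩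
    simp only [periodicLift, funLeft_apply, map_natCast, ZMod.val_natCast]
    rw [← hper.nat_mul (a / m), ← Nat.cast_mul, ← Nat.cast_add, Nat.mod_add_div']

end CyclicShift

theorem cshiftL_pow_sub_one_pow_char (K : Type*) [CommRing K] (p : ℕ) [Fact p.Prime] [CharP K p]
    (n : ℕ) : (cshiftL K (p * n) ^ n - 1) ^ p = 0 := by
  rw [sub_one_pow_char_of_algebra (K := K), ← pow_mul, mul_comm, cshiftL_pow_self, sub_self]

section Covering

variable {F : Type*} [Field F] {n : ℕ}

theorem finrank_zmod_fun (n : ℕ) [NeZero n] : finrank F (ZMod n → F) = n := by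
  rw [finrank_fintype_fun_eq_card, ZMod.card]

theorem cyclicallyCoveringF_iff {U : Submodule F (ZMod n → F)} :
    CyclicallyCoveringF U ↔ ∀ x, ∃ k : ℕ, (cshiftL F n ^ k) x ∈ U := by
  simp only [CyclicallyCoveringF, iterate_cshiftF]

theorem finrank_sub_finrank_le_hF {U : Submodule F (ZMod n → F)} (hU : CyclicallyCoveringF U) :
    finrank F (ZMod n → F) - finrank F U ≤ hF F n :=
  le_csSup ⟨finrank F (ZMod n → F), by rintro _ ⟨V, -, rfl⟩; exact Nat.sub_le _ _⟩ ⟨U, hU, rfl⟩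

theorem hF_le {d : ℕ}
    (h : ∀ U : Submodule F (ZMod n → F), CyclicallyCoveringF U →
      finrank F (ZMod n → F) - finrank F U ≤ d) : hF F n ≤ d :=
  csSup_le' <| by rintro _ ⟨U, hU, rfl⟩; exact h U hU

end Covering

section Descent

variable {F : Type*} [Field F] {n N : ℕ}

local notation "T" => cshiftL F N ^ n - 1

theorem commute_cshiftL_pow_sub_one : Commute (cshiftL F N) T :=
  (Commute.self_pow _ n).sub_right (Commute.one_right _)

theorem cyclicallyCoveringF_comap_periodicLift [NeZero N] (h : n ∣ N)
    {U : Submodule F (ZMod N → F)} (hU : CyclicallyCoveringF U) {j : ℕ}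
    (hj : (ker (T ^ (j + 1))).map (T ^ j) = ker T) :
    CyclicallyCoveringF (((U ⊓ ker (T ^ (j + 1))).map (T ^ j)).comap (periodicLift F h)) := by
  rw [cyclicallyCoveringF_iff] at hU ⊢
  intro x
  have hx : periodicLift F h x ∈ (ker (T ^ (j + 1))).map (T ^ j) := by
    rw [hj, ← range_periodicLift h]
    exact mem_range_self _ x
  obtain ⟨k, hk⟩ := exists_pow_mem_map_inf_ker (commute_cshiftL_pow_sub_one.pow_right _)
    (commute_cshiftL_pow_sub_one.pow_right _) hU hx
  exact ⟨k, by rwa [Submodule.mem_comap, ← cshiftL_pow_periodicLift]⟩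

end Descent

theorem hF_mul_le_of_charP (F : Type*) [Field F] (p : ℕ) [Fact p.Prime] [CharP F p] (n : ℕ)
    [NeZero n] : hF F (p * n) ≤ p * hF F n := by
  have h : n ∣ p * n := dvd_mul_left n p
  set T := cshiftL F (p * n) ^ n - 1
  have hρ : Function.Injective (periodicLift F h) := periodicLift_injective h
  have hT : T ^ p = 0 := cshiftL_pow_sub_one_pow_char F p n
  have hkerT : finrank F (ker T) = n := by
    rw [← range_periodicLift h, finrank_range_of_inj hρ, finrank_zmod_fun]
  have hfull : ∀ j < p, (ker (T ^ (j + 1))).map (T ^ j) = ker T := fun j hj ↦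
    map_pow_ker_pow_succ_eq_ker T hT (by rw [hkerT, finrank_zmod_fun]) hj
  refine hF_le fun U hU ↦ ?_
  let B j := ((U ⊓ ker (T ^ (j + 1))).map (T ^ j)).comap (periodicLift F h)
  have hB : ∀ j < p, n ≤ finrank F (B j) + hF F n := fun j hj ↦ by
    have hcodim := finrank_sub_finrank_le_hF (U := B j)
      (cyclicallyCoveringF_comap_periodicLift h hU (hfull j hj))
    have hle := Submodule.finrank_le (B j)
    rw [finrank_zmod_fun] at hcodim hle
    omega
  have hsum : ∑ j ∈ range p, finrank F (B j) = finrank F U := by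
    have hfilt := sum_finrank_map_pow_inf_ker_pow_succ T U p
    rw [hT, ker_zero, inf_top_eq] at hfilt
    rw [← hfilt]
    refine sum_congr rfl fun j _ ↦ Submodule.finrank_comap_eq_of_le_range hρ ?_
    rw [range_periodicLift h]
    exact map_pow_le_ker_of_le_ker_pow_succ T inf_le_right
  have hsum_le := sum_le_sum fun j hj ↦ hB j (mem_range.1 hj)
  rw [sum_add_distrib, hsum, sum_const, sum_const, card_range, smul_eq_mul, smul_eq_mul] at hsum_le
  rw [finrank_zmod_fun]
  omega

theorem hF_p_mul_le_general (p : ℕ) (hp : p.Prime) (F : Type) [Field F] [Fintype F]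
    (e : ℕ) (hcard : Fintype.card F = p ^ e) (n : ℕ) :
    hF F (p * n) ≤ p * hF F n := by
  have : Fact p.Prime := ⟨hp⟩
  have : CharP F p := charP_of_card_eq_prime_pow hcard
  rcases Nat.eq_zero_or_pos n with rfl | hn
  · rw [mul_zero]
    exact Nat.le_mul_of_pos_left _ hp.pos
  · have : NeZero n := ⟨hn.ne'⟩
    exact hF_mul_le_of_charP F p n

/-- Let `p` be a prime and let `q` be a power of `p` (so `𝔽_q` is a finite field `F` of
cardinality `q = p^e`). Then for all `n ∈ ℕ`, `h_q(pn) ≤ p·h_q(n)`. -/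
theorem hF_p_mul_le (p : ℕ) (hp : p.Prime) (F : Type) [Field F] [Fintype F]
    (e : ℕ) (he : 0 < e) (hcard : Fintype.card F = p ^ e) (n : ℕ) :
    hF F (p * n) ≤ p * hF F n :=
  hF_p_mul_le_general p hp F e hcard n
end
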